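/- arXiv:2204.14188 — 2 statements merged into one kernel-verified Lean document; each statement's English description precedes it below -/
import Mathlib

section
/- Let f : ℝ → ℝ be continuous and 2π-periodic, and suppose the conjugate function f̃(x) = lim_{h→0⁺} f̃(x,h) exists for almost every x and extends to a continuous 2π-periodic function on ℝ. Assume (Theorem A) that the harmonic conjugate f̃(r,x) satisfies f̃(r,x) - f̃(x,1-r) → 0 uniformly in x as r → 1⁻, and that f̃(r,x) → f̃(x) uniformly as r → 1⁻. Then f̃(x,h) converges uniformly in x as h → 0⁺. -/
/- By Theorem A, `f̃(x, 1 - r) = f̃(r, x) - (f̃(r, x) - f̃(x, 1 - r))` converges uniformly to `f̃`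
as `r → 1⁻`, being the difference of a sequence converging uniformly to `f̃` and one converging
uniformly to `0`; substituting `r = 1 - h` turns this into uniform convergence as `h → 0⁺`. -/

open Real MeasureTheory Filter Topology

noncomputable def conjTrunc (f : ℝ → ℝ) (x h : ℝ) : ℝ :=
  -(1 / π) * ∫ t in h..π, (f (x + t) - f (x - t)) * (1 / 2 * Real.cot (t / 2))

theorem TendstoUniformly.of_sub_tendstoUniformly_zero {ι α β : Type*} [UniformSpace β]
    [AddCommGroup β] [IsUniformAddGroup β] {F G : ι → α → β} {g : α → β} {l : Filter ι}
    (hF : TendstoUniformly F g l) (hFG : TendstoUniformly (F - G) 0 l) :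
    TendstoUniformly G g l := by
  simpa only [sub_sub_cancel, sub_zero] using hF.sub hFG

theorem TendstoUniformly.comp_tendsto {ι κ α β : Type*} [UniformSpace β] {F : ι → α → β}
    {g : α → β} {l : Filter ι} {l' : Filter κ} (hF : TendstoUniformly F g l) {φ : κ → ι}
    (hφ : Tendsto φ l' l) : TendstoUniformly (fun k => F (φ k)) g l' :=
  fun u hu => hφ.eventually (hF u hu)

theorem tendsto_one_sub_nhdsGT_zero_nhdsLT_one :
    Tendsto (fun h : ℝ => 1 - h) (𝓝[>] 0) (𝓝[<] 1) := by
  refine tendsto_nhdsWithin_of_tendsto_nhds_of_eventually_within _ ?_ ?_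
  · exact ((continuous_const.sub continuous_id).tendsto' 0 1 (by simp)).mono_left
      nhdsWithin_le_nhds
  · filter_upwards [self_mem_nhdsWithin] with h (hh : 0 < h)
    exact sub_lt_self 1 hh

theorem stmt1_general (f : ℝ → ℝ)
    (ftilde : ℝ → ℝ)
    (fr : ℝ → ℝ → ℝ)  -- harmonic conjugate (conjugate Poisson integral), fr r x
    (hThmA : TendstoUniformly (fun r x => fr r x - conjTrunc f x (1 - r)) 0 (𝓝[<] (1 : ℝ)))
    (hAbel : TendstoUniformly (fun r x => fr r x) ftilde (𝓝[<] (1 : ℝ))) :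
    ∃ g : ℝ → ℝ, TendstoUniformly (fun h x => conjTrunc f x h) g (𝓝[>] (0 : ℝ)) := by
  have hconj : TendstoUniformly (fun r x => conjTrunc f x (1 - r)) ftilde (𝓝[<] (1 : ℝ)) :=
    hAbel.of_sub_tendstoUniformly_zero hThmA
  refine ⟨ftilde, ?_⟩
  simpa using hconj.comp_tendsto tendsto_one_sub_nhdsGT_zero_nhdsLT_one

theorem stmt1 (f : ℝ → ℝ) (hf : Continuous f) (hper : Function.Periodic f (2 * π))
    (ftilde : ℝ → ℝ) (hft_cont : Continuous ftilde)
    (hft_per : Function.Periodic ftilde (2 * π))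
    (hft_ae : ∀ᵐ x : ℝ, Tendsto (fun h => conjTrunc f x h) (𝓝[>] (0 : ℝ)) (𝓝 (ftilde x)))
    (fr : ℝ → ℝ → ℝ)  -- harmonic conjugate (conjugate Poisson integral), fr r x
    (hThmA : TendstoUniformly (fun r x => fr r x - conjTrunc f x (1 - r)) 0 (𝓝[<] (1 : ℝ)))
    (hAbel : TendstoUniformly (fun r x => fr r x) ftilde (𝓝[<] (1 : ℝ))) :
    ∃ g : ℝ → ℝ, TendstoUniformly (fun h x => conjTrunc f x h) g (𝓝[>] (0 : ℝ)) :=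
  stmt1_general f ftilde fr hThmA hAbel
end

section
/- Let f : ℝ → ℝ be continuous and 2π-periodic with modulus of continuity ω satisfying the Dini condition ∫_0^π ω(t)/t dt < ∞. Then the truncated conjugate integrals f̃(x,h) converge uniformly in x as h → 0⁺; consequently (by Zamansky's theorem) the conjugate function f̃ is continuous. -/
/-!
Since `|f (x + t) - f (x - t)| ≤ 2 ω(t)` and `0 ≤ ½ cot (t / 2) ≤ 1 / t` on `(0, π]`, the integrand
of `f̃(x, h)` is dominated, uniformly in `x`, by the integrable function `2 ω(t) / t`. Hence
`f̃(x, h)` differs from the integral over all of `(0, π]` by at most `(1/π) ∫₀ʰ 2 ω(t) / t dt`,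
which tends to `0` independently of `x`; the limit is continuous in `x` by dominated convergence.
-/

open Real MeasureTheory Filter Topology

noncomputable def modulus (f : ℝ → ℝ) (δ : ℝ) : ℝ :=
  sSup {y : ℝ | ∃ s t : ℝ, |s - t| ≤ δ ∧ y = |f s - f t|}

open Set
open scoped Interval

namespace Real

@[fun_prop]
lemma measurable_cot : Measurable cot := by
  rw [show cot = fun x => cos x / sin x from funext cot_eq_cos_div_sin]
  fun_prop

lemma cot_nonneg {x : ℝ} (h0 : 0 < x) (hx : x ≤ π / 2) : 0 ≤ cot x := by
  rw [cot_eq_cos_div_sin]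
  exact div_nonneg (cos_nonneg_of_mem_Icc ⟨by linarith [pi_pos], hx⟩)
    (sin_nonneg_of_nonneg_of_le_pi h0.le (by linarith [pi_pos]))

lemma mul_cos_le_sin {x : ℝ} (h0 : 0 < x) (hx : x < π) : x * cos x ≤ sin x := by
  have hsin : 0 < sin x := sin_pos_of_pos_of_lt_pi h0 hx
  rcases le_or_gt (cos x) 0 with hcos | hcos
  · nlinarith
  · have hx2 : x < π / 2 := by
      by_contra! h
      linarith [cos_nonpos_of_pi_div_two_le_of_le h (by linarith)]
    have := lt_tan h0 hx2
    rw [tan_eq_sin_div_cos, lt_div_iff₀ hcos] at this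
    exact this.le

lemma cot_le_inv {x : ℝ} (h0 : 0 < x) (hx : x < π) : cot x ≤ x⁻¹ := by
  rw [cot_eq_cos_div_sin, div_le_iff₀ (sin_pos_of_pos_of_lt_pi h0 hx), inv_mul_eq_div,
    le_div_iff₀ h0, mul_comm]
  exact mul_cos_le_sin h0 hx

lemma half_mul_cot_half_mem_Icc {t : ℝ} (ht : t ∈ Ioc 0 π) : 1 / 2 * cot (t / 2) ∈ Icc 0 t⁻¹ := by
  refine ⟨mul_nonneg (by norm_num) (cot_nonneg (half_pos ht.1) (by linarith [ht.2])), ?_⟩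
  calc 1 / 2 * cot (t / 2) ≤ 1 / 2 * (t / 2)⁻¹ := by
        gcongr; exact cot_le_inv (half_pos ht.1) (by linarith [ht.2, pi_pos])
    _ = t⁻¹ := by field_simp

end Real

section DominatedTail

variable {E : Type*} [NormedAddCommGroup E] [NormedSpace ℝ E] {X : Type*}
  {F : X → ℝ → E} {bound : ℝ → ℝ} {a b : ℝ}

theorem tendstoUniformly_integral_of_dominated (hab : a < b)
    (hF_int : ∀ x, IntervalIntegrable (F x) volume a b)
    (h_bound : ∀ x, ∀ t ∈ Ioc a b, ‖F x t‖ ≤ bound t)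
    (bound_integrable : IntervalIntegrable bound volume a b) :
    TendstoUniformly (fun h x => ∫ t in h..b, F x t) (fun x => ∫ t in a..b, F x t) (𝓝[>] a) := by
  have h_small : Tendsto (fun h => ∫ t in a..h, bound t) (𝓝[>] a) (𝓝 0) := by
    have := (intervalIntegral.continuousOn_primitive_interval' bound_integrable
      left_mem_uIcc) a left_mem_uIcc
    rw [uIcc_of_le hab.le, ContinuousWithinAt, intervalIntegral.integral_same] at this
    exact this.mono_left (nhdsWithin_le_of_mem (Icc_mem_nhdsGT hab))
  rw [Metric.tendstoUniformly_iff]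
  intro ε hε
  filter_upwards [h_small.eventually_lt_const hε, Ioo_mem_nhdsGT hab] with h hε' hh x
  have hah : Ioc a h ⊆ Ioc a b := Ioc_subset_Ioc_right hh.2.le
  have h_sub : uIcc a h ⊆ uIcc a b := by
    rw [uIcc_of_le hh.1.le, uIcc_of_le hab.le]; exact Icc_subset_Icc_right hh.2.le
  have h_split : (∫ t in a..b, F x t) - ∫ t in h..b, F x t = ∫ t in a..h, F x t :=
    (eq_sub_of_add_eq (intervalIntegral.integral_add_adjacent_intervals
      ((hF_int x).mono_set h_sub) ((hF_int x).mono_set (by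
        rw [uIcc_of_le hh.2.le, uIcc_of_le hab.le]; exact Icc_subset_Icc_left hh.1.le)))).symm
  rw [dist_eq_norm, h_split]
  calc ‖∫ t in a..h, F x t‖ ≤ ∫ t in a..h, bound t :=
        intervalIntegral.norm_integral_le_of_norm_le hh.1.le
          (ae_of_all _ fun t ht => h_bound x t (hah ht))
          (bound_integrable.mono_set h_sub)
    _ < ε := hε'

end DominatedTail

section Modulus

variable {f : ℝ → ℝ} {M : ℝ}

lemma abs_sub_le_modulus (hM : ∀ x, |f x| ≤ M) {s t δ : ℝ} (h : |s - t| ≤ δ) :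
    |f s - f t| ≤ modulus f δ := by
  refine le_csSup ⟨2 * M, ?_⟩ ⟨s, t, h, rfl⟩
  rintro y ⟨s, t, -, rfl⟩
  linarith [abs_sub (f s) (f t), hM s, hM t]

lemma abs_add_sub_sub_le_two_mul_modulus (hM : ∀ x, |f x| ≤ M) (x : ℝ) {t : ℝ} (ht : 0 ≤ t) :
    |f (x + t) - f (x - t)| ≤ 2 * modulus f t := by
  have h₁ := abs_sub_le_modulus hM (s := x + t) (t := x) (δ := t) (by simp [abs_of_nonneg ht])
  have h₂ := abs_sub_le_modulus hM (s := x) (t := x - t) (δ := t) (by simp [abs_of_nonneg ht])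
  linarith [abs_sub_le (f (x + t)) (f x) (f (x - t))]

lemma norm_conjugate_integrand_le (hM : ∀ x, |f x| ≤ M) (x : ℝ) {t : ℝ} (ht : t ∈ Ioc 0 π) :
    ‖(f (x + t) - f (x - t)) * (1 / 2 * cot (t / 2))‖ ≤ 2 * (modulus f t / t) := by
  obtain ⟨h_nonneg, h_le⟩ := half_mul_cot_half_mem_Icc ht
  have h_diff := abs_add_sub_sub_le_two_mul_modulus hM x ht.1.le
  calc ‖(f (x + t) - f (x - t)) * (1 / 2 * cot (t / 2))‖
        = |f (x + t) - f (x - t)| * (1 / 2 * cot (t / 2)) := by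
          rw [norm_mul, Real.norm_eq_abs, Real.norm_of_nonneg h_nonneg]
    _ ≤ 2 * modulus f t * t⁻¹ := mul_le_mul h_diff h_le h_nonneg ((abs_nonneg _).trans h_diff)
    _ = 2 * (modulus f t / t) := by ring

end Modulus

theorem stmt9 (f : ℝ → ℝ) (hf : Continuous f) (hper : Function.Periodic f (2 * π))
    (hDini : IntegrableOn (fun t => modulus f t / t) (Set.Ioc (0 : ℝ) π) volume) :
    ∃ g : ℝ → ℝ, Continuous g ∧
      TendstoUniformly (fun h x => conjTrunc f x h) g (𝓝[>] (0 : ℝ)) := by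
  obtain ⟨M, hM⟩ : ∃ M, ∀ x, |f x| ≤ M := by
    obtain ⟨M, hM⟩ := isBounded_iff_forall_norm_le.1
      (hper.isBounded_of_continuous two_pi_pos.ne' hf)
    exact ⟨M, fun x => hM (f x) ⟨x, rfl⟩⟩
  set F : ℝ → ℝ → ℝ := fun x t => (f (x + t) - f (x - t)) * (1 / 2 * cot (t / 2))
  have h_bound : ∀ x, ∀ t ∈ Ι 0 π, ‖F x t‖ ≤ 2 * (modulus f t / t) := by
    rw [uIoc_of_le pi_pos.le]
    exact fun x t ht => norm_conjugate_integrand_le hM x ht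
  have h_meas : ∀ x, AEStronglyMeasurable (F x) (volume.restrict (Ι 0 π)) := fun x =>
    (by fun_prop : Measurable (F x)).aestronglyMeasurable
  have bound_integrable : IntervalIntegrable (fun t => 2 * (modulus f t / t)) volume 0 π :=
    (intervalIntegrable_iff_integrableOn_Ioc_of_le pi_pos.le).2 (hDini.const_mul 2)
  refine ⟨fun x => -(1 / π) * ∫ t in 0..π, F x t, ?_, ?_⟩
  · exact continuous_const.mul <| intervalIntegral.continuous_of_dominated_interval h_meas
      (fun x => ae_of_all _ (h_bound x)) bound_integrable (ae_of_all _ fun t _ => by fun_prop)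
  · exact Real.uniformContinuous_const_mul.comp_tendstoUniformly <|
      tendstoUniformly_integral_of_dominated pi_pos
        (fun x => bound_integrable.mono_fun' (h_meas x)
          (ae_restrict_of_forall_mem measurableSet_uIoc (h_bound x)))
        (by simpa only [uIoc_of_le pi_pos.le] using h_bound) bound_integrable
end
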